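/- Let P = (C, w, ≁) be a polymer model with finite partition function Z, let {Λ_i}_{i∈[m]} be a polymer clique cover of size m, and let |·| : C → ℝ_{>0} be a size function. Suppose there are a monotonically increasing invertible function g : ℝ → ℝ_{>0} and a bound B ∈ ℝ_{>0} such that for every i ∈ [m], ∑_{γ ∈ Λ_i} g(|γ|) w_γ ≤ B. Then for all ε ∈ (0,1) and all k ≥ g^{-1}(Bm/ε), it holds that e^{−ε} ≤ Z_{≤k}/Z ≤ 1 and d_TV(μ, μ_{≤k}) ≤ ε. -/

import Mathlib

open scoped ENNReal Classical

/-- An abstract polymer model: a set `C` of polymers with positive real weights and a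
reflexive, symmetric incompatibility relation. -/
structure PolymerModel (C : Type*) where
  w : C → ℝ
  w_pos : ∀ γ, 0 < w γ
  incomp : C → C → Prop
  incomp_refl : ∀ γ, incomp γ γ
  incomp_symm : ∀ γ γ', incomp γ γ' → incomp γ' γ

namespace PolymerModel

variable {C : Type*}

/-- A polymer family: a finite set of pairwise compatible polymers. -/
def IsFamily (P : PolymerModel C) (Γ : Finset C) : Prop :=
  ∀ γ ∈ Γ, ∀ γ' ∈ Γ, γ ≠ γ' → ¬P.incomp γ γ'

/-- A polymer clique: a set of pairwise incompatible polymers. -/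
def IsClique (P : PolymerModel C) (Λ : Set C) : Prop :=
  ∀ γ ∈ Λ, ∀ γ' ∈ Λ, P.incomp γ γ'

/-- The partition function restricted to `B`:
`Z_B = ∑_{Γ ∈ F_B} ∏_{γ ∈ Γ} w_γ` (valued in `ℝ≥0∞`). -/
noncomputable def Z (P : PolymerModel C) (B : Set C) : ℝ≥0∞ :=
  ∑' Γ : {Γ : Finset C // P.IsFamily Γ ∧ ↑Γ ⊆ B}, ∏ γ ∈ Γ.1, ENNReal.ofReal (P.w γ)

/-- The Gibbs distribution restricted to `B`, regarded as a distribution on all finite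
sets of polymers (assigning `0` outside `F_B`). -/
noncomputable def gibbs (P : PolymerModel C) (B : Set C) (Γ : Finset C) : ℝ≥0∞ :=
  if P.IsFamily Γ ∧ ↑Γ ⊆ B then (∏ γ ∈ Γ, ENNReal.ofReal (P.w γ)) / P.Z B else 0

/-- The clique dynamics condition for a function `f : C → ℝ_{>0}`:
for all `γ`, `∑_{γ' ≁ γ, γ' ≠ γ} f(γ') w_{γ'}/(1 + w_{γ'}) ≤ f(γ)`. -/
def CliqueDynamicsCondition (P : PolymerModel C) (f : C → ℝ) : Prop :=
  ∀ γ : C,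
    ∑' γ' : {γ' : C // P.incomp γ' γ ∧ γ' ≠ γ},
        ENNReal.ofReal (f γ' * P.w γ' / (1 + P.w γ')) ≤ ENNReal.ofReal (f γ)

/-- Total variation distance between two distributions on finite sets of polymers. -/
noncomputable def dTV (μ ν : Finset C → ℝ≥0∞) : ℝ≥0∞ :=
  (∑' Γ : Finset C, ((μ Γ - ν Γ) + (ν Γ - μ Γ))) / 2

end PolymerModel

/-!
Splitting a polymer family into its polymers of size `≤ k` and the others gives
`Z ≤ Z_{≤k} · Z_{>k}`, and `Z_{>k} ≤ ∏_{|γ|>k} (1 + w_γ) ≤ exp (∑_{|γ|>k} w_γ)`. A Markov bound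
with weight `g(|γ|) ≥ g(k) ≥ Bm/ε` and the cover by the `Λ_i` give `∑_{|γ|>k} w_γ ≤ ε`, hence
`Z_{≤k}/Z ≥ e^{-ε}`. On `F_{≤k}` the Gibbs measure `μ` is `Z_{≤k}/Z` times `μ_{≤k}`, so
`d_TV(μ, μ_{≤k}) = 1 - Z_{≤k}/Z ≤ 1 - e^{-ε} ≤ ε`.
-/

open ENNReal

theorem sum_powerset_prod_ofReal_le_exp {ι : Type*} (A : Finset ι) {f : ι → ℝ}
    (hf : ∀ i, 0 ≤ f i) :
    ∑ T ∈ A.powerset, ∏ i ∈ T, ENNReal.ofReal (f i) ≤ ENNReal.ofReal (Real.exp (∑ i ∈ A, f i)) :=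
  calc ∑ T ∈ A.powerset, ∏ i ∈ T, ENNReal.ofReal (f i)
      = ENNReal.ofReal (∏ i ∈ A, (1 + f i)) := by
        rw [ENNReal.ofReal_prod_of_nonneg fun i _ => add_nonneg zero_le_one (hf i),
          ← Finset.prod_one_add]
        simp [ENNReal.ofReal_add zero_le_one (hf _)]
    _ ≤ ENNReal.ofReal (Real.exp (∑ i ∈ A, f i)) :=
        ENNReal.ofReal_le_ofReal (Real.prod_one_add_le_exp_sum A hf)

theorem tsum_ofReal_le_inv_mul_tsum {ι : Type*} {f u : ι → ℝ} (hf : ∀ i, 0 ≤ f i) {a : ℝ}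
    (ha : 0 < a) {t : Set ι} (hu : ∀ i ∈ t, a ≤ u i) :
    ∑' i : t, ENNReal.ofReal (f i) ≤ ENNReal.ofReal a⁻¹ * ∑' i, ENNReal.ofReal (u i * f i) :=
  calc ∑' i : t, ENNReal.ofReal (f i)
      ≤ ∑' i : t, ENNReal.ofReal a⁻¹ * ENNReal.ofReal (u i * f i) :=
        ENNReal.tsum_le_tsum fun i => by
          rw [← ENNReal.ofReal_mul (inv_nonneg.2 ha.le)]
          refine ENNReal.ofReal_le_ofReal ?_
          calc f i = a⁻¹ * (a * f i) := by field_simp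
            _ ≤ a⁻¹ * (u i * f i) := by gcongr; exacts [hf i, hu i i.2]
    _ ≤ ENNReal.ofReal a⁻¹ * ∑' i, ENNReal.ofReal (u i * f i) := by
        rw [ENNReal.tsum_mul_left]
        gcongr
        exact ENNReal.tsum_comp_le_tsum_of_injective Subtype.val_injective _

theorem tsum_le_card_mul_of_iUnion_eq_univ {ι α : Type*} [Fintype ι] {s : ι → Set α}
    (hs : ⋃ i, s i = Set.univ) {f : α → ℝ≥0∞} {b : ℝ≥0∞} (hb : ∀ i, ∑' x : s i, f x ≤ b) :
    ∑' x, f x ≤ Fintype.card ι * b :=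
  calc ∑' x, f x = ∑' x : ⋃ i, s i, f x := by rw [hs, tsum_univ]
    _ ≤ ∑ i, ∑' x : s i, f x := ENNReal.tsum_iUnion_le f s
    _ ≤ ∑ _i : ι, b := Finset.sum_le_sum fun i _ => hb i
    _ = Fintype.card ι * b := by rw [Finset.sum_const, nsmul_eq_mul, Finset.card_univ]

theorem ofReal_exp_neg_le_div_of_le_mul {a b : ℝ≥0∞} {x : ℝ} (hb : b ≠ 0) (hb' : b ≠ ⊤)
    (h : b ≤ a * ENNReal.ofReal (Real.exp x)) : ENNReal.ofReal (Real.exp (-x)) ≤ a / b := by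
  rw [ENNReal.le_div_iff_mul_le (Or.inl hb) (Or.inl hb')]
  calc ENNReal.ofReal (Real.exp (-x)) * b
      ≤ ENNReal.ofReal (Real.exp (-x)) * (a * ENNReal.ofReal (Real.exp x)) := by gcongr
    _ = a := by
        rw [mul_left_comm, ← ENNReal.ofReal_mul (Real.exp_pos _).le, ← Real.exp_add,
          neg_add_cancel, Real.exp_zero, ENNReal.ofReal_one, mul_one]

namespace PolymerModel

variable {C : Type*} (P : PolymerModel C)

theorem IsFamily.subset {P : PolymerModel C} {Γ Γ' : Finset C} (h : P.IsFamily Γ')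
    (hΓ : Γ ⊆ Γ') : P.IsFamily Γ :=
  fun γ hγ γ' hγ' => h γ (hΓ hγ) γ' (hΓ hγ')

theorem Z_mono {B B' : Set C} (h : B ⊆ B') : P.Z B ≤ P.Z B' :=
  tsum_mono_subtype (fun Γ : Finset C => ∏ γ ∈ Γ, ENNReal.ofReal (P.w γ))
    (s := {Γ | P.IsFamily Γ ∧ (Γ : Set C) ⊆ B}) (t := {Γ | P.IsFamily Γ ∧ (Γ : Set C) ⊆ B'})
    fun _ hΓ => ⟨hΓ.1, hΓ.2.trans h⟩

theorem one_le_Z (B : Set C) : 1 ≤ P.Z B := by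
  rw [Z]
  simpa using ENNReal.le_tsum
    (f := fun Γ : {Γ : Finset C // P.IsFamily Γ ∧ ↑Γ ⊆ B} => ∏ γ ∈ Γ.1, ENNReal.ofReal (P.w γ))
    ⟨∅, by simp [IsFamily]⟩

theorem Z_ne_zero (B : Set C) : P.Z B ≠ 0 :=
  (zero_lt_one.trans_le (P.one_le_Z B)).ne'

theorem Z_union_le_mul (s t : Set C) : P.Z (s ∪ t) ≤ P.Z s * P.Z t := by
  let split : {Γ : Finset C // P.IsFamily Γ ∧ ↑Γ ⊆ s ∪ t} →
      {Γ : Finset C // P.IsFamily Γ ∧ ↑Γ ⊆ s} × {Γ : Finset C // P.IsFamily Γ ∧ ↑Γ ⊆ t} :=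
    fun Γ =>
      (⟨Γ.1.filter (· ∈ s), Γ.2.1.subset (Finset.filter_subset _ _), fun γ hγ => by
          simp only [Finset.coe_filter, Set.mem_ofPred_eq] at hγ; exact hγ.2⟩,
        ⟨Γ.1.filter (· ∉ s), Γ.2.1.subset (Finset.filter_subset _ _), fun γ hγ => by
          simp only [Finset.coe_filter, Set.mem_ofPred_eq] at hγ
          exact (Γ.2.2 hγ.1).resolve_left hγ.2⟩)
  have split_injective : Function.Injective split := fun Γ Γ' h => by
    simp only [split, Prod.mk.injEq, Subtype.mk.injEq] at h
    apply Subtype.ext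
    rw [← Finset.filter_union_filter_not_eq (· ∈ s) Γ.1, h.1, h.2,
      Finset.filter_union_filter_not_eq]
  calc P.Z (s ∪ t)
      = ∑' Γ, (∏ γ ∈ (split Γ).1.1, ENNReal.ofReal (P.w γ)) *
          ∏ γ ∈ (split Γ).2.1, ENNReal.ofReal (P.w γ) :=
        tsum_congr fun Γ => (Finset.prod_filter_mul_prod_filter_not Γ.1 (· ∈ s) _).symm
    _ ≤ ∑' q : {Γ : Finset C // P.IsFamily Γ ∧ ↑Γ ⊆ s} × {Γ : Finset C // P.IsFamily Γ ∧ ↑Γ ⊆ t},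
          (∏ γ ∈ q.1.1, ENNReal.ofReal (P.w γ)) * ∏ γ ∈ q.2.1, ENNReal.ofReal (P.w γ) :=
        tsum_comp_le_tsum_of_injective split_injective
          (fun q => (∏ γ ∈ q.1.1, ENNReal.ofReal (P.w γ)) * ∏ γ ∈ q.2.1, ENNReal.ofReal (P.w γ))
    _ = P.Z s * P.Z t := by
        rw [ENNReal.tsum_prod']
        simp_rw [ENNReal.tsum_mul_left, ENNReal.tsum_mul_right]
        rfl

theorem Z_le_ofReal_exp {t : Set C} {S : ℝ} (hS : 0 ≤ S)
    (hsum : ∑' γ : t, ENNReal.ofReal (P.w γ) ≤ ENNReal.ofReal S) :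
    P.Z t ≤ ENNReal.ofReal (Real.exp S) := by
  rw [Z, ENNReal.tsum_eq_iSup_sum]
  refine iSup_le fun F => ?_
  set A : Finset C := F.sup Subtype.val
  have hAt : ↑A ⊆ t := fun γ hγ => by
    obtain ⟨Γ, -, hγΓ⟩ := Finset.mem_sup.1 hγ
    exact Γ.2.2 hγΓ
  have hA : ∑ γ ∈ A, P.w γ ≤ S := by
    rw [← ENNReal.ofReal_le_ofReal_iff hS,
      ENNReal.ofReal_sum_of_nonneg fun γ _ => (P.w_pos γ).le, ← Finset.tsum_subtype']
    exact (tsum_mono_subtype (fun γ => ENNReal.ofReal (P.w γ)) hAt).trans hsum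
  calc ∑ Γ ∈ F, ∏ γ ∈ Γ.1, ENNReal.ofReal (P.w γ)
      = ∑ T ∈ F.map (Function.Embedding.subtype _), ∏ γ ∈ T, ENNReal.ofReal (P.w γ) :=
        (Finset.sum_map F (Function.Embedding.subtype _)
          fun T => ∏ γ ∈ T, ENNReal.ofReal (P.w γ)).symm
    _ ≤ ∑ T ∈ A.powerset, ∏ γ ∈ T, ENNReal.ofReal (P.w γ) :=
        Finset.sum_le_sum_of_subset fun T hT => by
          obtain ⟨Γ, hΓ, rfl⟩ := Finset.mem_map.1 hT
          exact Finset.mem_powerset.2 (Finset.le_sup (f := Subtype.val) hΓ)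
    _ ≤ ENNReal.ofReal (Real.exp (∑ γ ∈ A, P.w γ)) :=
        sum_powerset_prod_ofReal_le_exp A fun γ => (P.w_pos γ).le
    _ ≤ ENNReal.ofReal (Real.exp S) := ENNReal.ofReal_le_ofReal (Real.exp_le_exp.2 hA)

theorem tsum_w_size_gt_le {m : ℕ} (hm : 0 < m) {Λ : Fin m → Set C}
    (hcover : ⋃ i, Λ i = Set.univ) {size : C → ℝ} {g : ℝ → ℝ} (hg : Monotone g) {B : ℝ}
    (hB : 0 < B) (hctc : ∀ i, ∑' γ : Λ i, ENNReal.ofReal (g (size γ) * P.w γ) ≤ ENNReal.ofReal B)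
    {ε k : ℝ} (hε : 0 < ε) (hgk : B * m / ε ≤ g k) :
    ∑' γ : ↥{γ | size γ ≤ k}ᶜ, ENNReal.ofReal (P.w γ) ≤ ENNReal.ofReal ε :=
  calc ∑' γ : ↥{γ | size γ ≤ k}ᶜ, ENNReal.ofReal (P.w γ)
      ≤ ENNReal.ofReal (B * m / ε)⁻¹ * ∑' γ, ENNReal.ofReal (g (size γ) * P.w γ) :=
        tsum_ofReal_le_inv_mul_tsum (fun γ => (P.w_pos γ).le) (by positivity)
          fun γ (hγ : ¬size γ ≤ k) => hgk.trans (hg (lt_of_not_ge hγ).le)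
    _ ≤ ENNReal.ofReal (B * m / ε)⁻¹ * (m * ENNReal.ofReal B) := by
        gcongr
        simpa using tsum_le_card_mul_of_iUnion_eq_univ hcover hctc
    _ = ENNReal.ofReal ε := by
        rw [← ENNReal.ofReal_natCast, ← ENNReal.ofReal_mul (by positivity),
          ← ENNReal.ofReal_mul (by positivity)]
        congr 1
        field_simp

theorem tsum_gibbs {B : Set C} (hB : P.Z B ≠ ⊤) : ∑' Γ, P.gibbs B Γ = 1 := by
  have hind : ∀ Γ, P.gibbs B Γ = {Γ : Finset C | P.IsFamily Γ ∧ ↑Γ ⊆ B}.indicator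
      (fun Γ => (∏ γ ∈ Γ, ENNReal.ofReal (P.w γ)) / P.Z B) Γ := fun Γ => by
    simp only [gibbs, Set.indicator_apply, Set.mem_ofPred_eq]
  rw [tsum_congr hind, ← tsum_subtype]
  simp_rw [div_eq_mul_inv]
  rw [ENNReal.tsum_mul_right]
  exact ENNReal.mul_inv_cancel (P.Z_ne_zero B) hB

theorem gibbs_eq_gibbs_mul_Z_div {B B' : Set C} (h : B ⊆ B') (hB' : P.Z B' ≠ ⊤) {Γ : Finset C}
    (hΓ : P.IsFamily Γ ∧ ↑Γ ⊆ B) : P.gibbs B' Γ = P.gibbs B Γ * (P.Z B / P.Z B') := by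
  have hB : P.Z B ≠ ⊤ := ne_top_of_le_ne_top hB' (P.Z_mono h)
  rw [gibbs, gibbs, if_pos hΓ, if_pos ⟨hΓ.1, hΓ.2.trans h⟩, div_eq_mul_inv, div_eq_mul_inv,
    div_eq_mul_inv, mul_assoc, ← mul_assoc (P.Z B)⁻¹, ENNReal.inv_mul_cancel (P.Z_ne_zero B) hB,
    one_mul]

theorem dTV_eq_tsum_tsub {μ ν : Finset C → ℝ≥0∞} (hμ : ∑' Γ, μ Γ = 1) (hν : ∑' Γ, ν Γ = 1) :
    dTV μ ν = ∑' Γ, (ν Γ - μ Γ) := by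
  have hsymm : ∑' Γ, (μ Γ - ν Γ) = ∑' Γ, (ν Γ - μ Γ) := by
    have h : ∑' Γ, μ Γ + ∑' Γ, (ν Γ - μ Γ) = ∑' Γ, ν Γ + ∑' Γ, (μ Γ - ν Γ) := by
      simp_rw [← ENNReal.tsum_add, add_tsub_eq_max, max_comm]
    rw [hμ, hν] at h
    exact ((ENNReal.add_right_inj one_ne_top).1 h).symm
  rw [dTV, ENNReal.tsum_add, hsymm, ← mul_two,
    ENNReal.mul_div_cancel_right two_ne_zero ofNat_ne_top]

theorem dTV_gibbs_of_subset {B B' : Set C} (h : B ⊆ B') (hB' : P.Z B' ≠ ⊤) :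
    dTV (P.gibbs B') (P.gibbs B) = 1 - P.Z B / P.Z B' := by
  have hB : P.Z B ≠ ⊤ := ne_top_of_le_ne_top hB' (P.Z_mono h)
  have htsub : ∀ Γ, P.gibbs B Γ - P.gibbs B' Γ = P.gibbs B Γ * (1 - P.Z B / P.Z B') := by
    intro Γ
    by_cases hΓ : P.IsFamily Γ ∧ ↑Γ ⊆ B
    · have hfin : P.gibbs B Γ ≠ ⊤ :=
        ne_top_of_le_ne_top one_ne_top (P.tsum_gibbs hB ▸ ENNReal.le_tsum Γ)
      rw [P.gibbs_eq_gibbs_mul_Z_div h hB' hΓ, ENNReal.mul_sub fun _ _ => hfin, mul_one]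
    · simp [gibbs, hΓ]
  rw [dTV_eq_tsum_tsub (P.tsum_gibbs hB') (P.tsum_gibbs hB), tsum_congr htsub,
    ENNReal.tsum_mul_right, P.tsum_gibbs hB, one_mul]

end PolymerModel

theorem model_truncation_via_clique_truncation_general {C : Type*}
    (P : PolymerModel C) (hZfin : P.Z Set.univ ≠ ⊤)
    {m : ℕ} (hm : 0 < m) (Λ : Fin m → Set C)
    (hcover : (⋃ i, Λ i) = Set.univ)
    (size : C → ℝ)
    (g : ℝ → ℝ) (hgmono : StrictMono g)
    (ginv : ℝ → ℝ)
    (hginv_right : ∀ y : ℝ, 0 < y → g (ginv y) = y)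
    (B : ℝ) (hB : 0 < B)
    (hctc : ∀ i : Fin m,
      ∑' γ : Λ i, ENNReal.ofReal (g (size γ) * P.w γ) ≤ ENNReal.ofReal B)
    (ε : ℝ) (hε : ε ∈ Set.Ioo (0 : ℝ) 1) (k : ℝ) (hk : ginv (B * m / ε) ≤ k) :
    (ENNReal.ofReal (Real.exp (-ε)) ≤ P.Z {γ | size γ ≤ k} / P.Z Set.univ ∧
        P.Z {γ | size γ ≤ k} / P.Z Set.univ ≤ 1) ∧
      PolymerModel.dTV (P.gibbs Set.univ) (P.gibbs {γ | size γ ≤ k})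
        ≤ ENNReal.ofReal ε := by
  set small : Set C := {γ | size γ ≤ k}
  have hgk : B * m / ε ≤ g k :=
    hginv_right (B * m / ε) (by have := hε.1; positivity) ▸ hgmono.monotone hk
  have hZ : P.Z Set.univ ≤ P.Z small * ENNReal.ofReal (Real.exp ε) :=
    calc P.Z Set.univ = P.Z (small ∪ smallᶜ) := by rw [Set.union_compl_self]
      _ ≤ P.Z small * P.Z smallᶜ := P.Z_union_le_mul _ _
      _ ≤ P.Z small * ENNReal.ofReal (Real.exp ε) := by
          gcongr
          exact P.Z_le_ofReal_exp hε.1.le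
            (P.tsum_w_size_gt_le hm hcover hgmono.monotone hB hctc hε.1 hgk)
  have hlower : ENNReal.ofReal (Real.exp (-ε)) ≤ P.Z small / P.Z Set.univ :=
    ofReal_exp_neg_le_div_of_le_mul (P.Z_ne_zero _) hZfin hZ
  have hupper : P.Z small / P.Z Set.univ ≤ 1 :=
    ENNReal.div_le_of_le_mul (by simpa using P.Z_mono (Set.subset_univ small))
  refine ⟨⟨hlower, hupper⟩, ?_⟩
  rw [P.dTV_gibbs_of_subset (Set.subset_univ small) hZfin]
  calc 1 - P.Z small / P.Z Set.univ ≤ 1 - ENNReal.ofReal (Real.exp (-ε)) :=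
        tsub_le_tsub_left hlower 1
    _ = ENNReal.ofReal (1 - Real.exp (-ε)) := by
        rw [ENNReal.ofReal_sub _ (Real.exp_pos _).le, ENNReal.ofReal_one]
    _ ≤ ENNReal.ofReal ε := ENNReal.ofReal_le_ofReal (by linarith [Real.one_sub_le_exp_neg ε])

/-- If every clique of a clique cover satisfies the clique truncation
condition for a monotonically increasing invertible `g : ℝ → ℝ_{>0}` and bound `B > 0`,
then for all `ε ∈ (0,1)` and all `k ≥ g⁻¹(Bm/ε)`:
`e^{−ε} ≤ Z_{≤k}/Z ≤ 1` and `d_TV(μ, μ_{≤k}) ≤ ε`. -/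
theorem model_truncation_via_clique_truncation {C : Type*} [Countable C]
    (P : PolymerModel C) (hZfin : P.Z Set.univ ≠ ⊤)
    {m : ℕ} (hm : 0 < m) (Λ : Fin m → Set C)
    (hclique : ∀ i, P.IsClique (Λ i)) (hcover : (⋃ i, Λ i) = Set.univ)
    (size : C → ℝ) (hsize : ∀ γ, 0 < size γ)
    (g : ℝ → ℝ) (hgpos : ∀ x, 0 < g x) (hgmono : StrictMono g)
    (ginv : ℝ → ℝ) (hginv_left : ∀ x : ℝ, ginv (g x) = x)
    (hginv_right : ∀ y : ℝ, 0 < y → g (ginv y) = y)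
    (B : ℝ) (hB : 0 < B)
    (hctc : ∀ i : Fin m,
      ∑' γ : Λ i, ENNReal.ofReal (g (size γ) * P.w γ) ≤ ENNReal.ofReal B)
    (ε : ℝ) (hε : ε ∈ Set.Ioo (0 : ℝ) 1) (k : ℝ) (hk : ginv (B * m / ε) ≤ k) :
    (ENNReal.ofReal (Real.exp (-ε)) ≤ P.Z {γ | size γ ≤ k} / P.Z Set.univ ∧
        P.Z {γ | size γ ≤ k} / P.Z Set.univ ≤ 1) ∧
      PolymerModel.dTV (P.gibbs Set.univ) (P.gibbs {γ | size γ ≤ k})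
        ≤ ENNReal.ofReal ε :=
  model_truncation_via_clique_truncation_general P hZfin hm Λ hcover size g hgmono ginv hginv_right
    B hB hctc ε hε k hk
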